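/- Let n ≥ 3 and set s_2^n := ∑_{i=2}^{n} 1/i, p̃_n := 2 + 4/(n + 1 + s_2^n), and p_n := 2(n+1)[(n+2)p̃_n − 2(n+3)] / [(n+1)n·p̃_n − 2(n² + 2n − 1)]. Then 2(n+1)/n < p_n < 2(n+3)/(n+1). -/

import Mathlib

/-!
Writing `q = p̃_n`, the exponent `p_n` is a Möbius function of `q` that fixes both endpoints
`2(n+1)/n` and `2(n+3)/(n+1)` and is increasing between them (its denominator is positive there).
So it suffices that `p̃_n` lies strictly between the endpoints, which after clearing denominators
says exactly `0 < s_2^n < n - 1`.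
-/

open Finset

/-- `p_n` as a function of `q = p̃_n`. -/
noncomputable def interpolationExponent (n q : ℝ) : ℝ :=
  2 * (n + 1) * ((n + 2) * q - 2 * (n + 3)) / ((n + 1) * n * q - 2 * (n ^ 2 + 2 * n - 1))

section interpolationExponent

variable {n q : ℝ}

theorem interpolationExponent_denom_pos (hn : 0 < n) (hq : 2 * (n + 1) / n < q) :
    0 < (n + 1) * n * q - 2 * (n ^ 2 + 2 * n - 1) := by
  rw [div_lt_iff₀ hn] at hq
  nlinarith

theorem lt_interpolationExponent (hn : 0 < n) (hq : 2 * (n + 1) / n < q) :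
    2 * (n + 1) / n < interpolationExponent n q := by
  have hD := interpolationExponent_denom_pos hn hq
  rw [div_lt_iff₀ hn] at hq
  rw [interpolationExponent, div_lt_div_iff₀ hn hD]
  nlinarith

theorem interpolationExponent_lt (hn : 0 < n) (hq : 2 * (n + 1) / n < q)
    (hq' : q < 2 * (n + 3) / (n + 1)) :
    interpolationExponent n q < 2 * (n + 3) / (n + 1) := by
  have hD := interpolationExponent_denom_pos hn hq
  have hn1 : 0 < n + 1 := by linarith
  rw [lt_div_iff₀ hn1] at hq'
  rw [interpolationExponent, div_lt_div_iff₀ hD hn1]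
  nlinarith

end interpolationExponent

theorem sum_Icc_two_one_div_pos {n : ℕ} (hn : 2 ≤ n) :
    0 < ∑ i ∈ Icc 2 n, (1 : ℝ) / i := by
  refine sum_pos (fun i hi => ?_) (nonempty_Icc.mpr hn)
  have : 0 < i := by linarith [(mem_Icc.mp hi).1]
  positivity

theorem sum_Icc_two_one_div_lt {n : ℕ} (hn : 2 ≤ n) :
    ∑ i ∈ Icc 2 n, (1 : ℝ) / i < n - 1 := by
  calc ∑ i ∈ Icc 2 n, (1 : ℝ) / i < ∑ _i ∈ Icc 2 n, (1 : ℝ) := by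
        refine sum_lt_sum_of_nonempty (nonempty_Icc.mpr hn) (fun i hi => ?_)
        have : (1 : ℝ) < i := by exact_mod_cast (mem_Icc.mp hi).1
        rw [div_lt_one (by linarith)]
        exact this
    _ = n - 1 := by
        rw [sum_const, Nat.card_Icc, nsmul_one, Nat.cast_sub (by omega)]
        push_cast
        ring

theorem two_mul_succ_div_lt_two_add_four_div {n s : ℝ} (hn : 0 < n) (hs₀ : 0 ≤ s)
    (hs : s < n - 1) : 2 * (n + 1) / n < 2 + 4 / (n + 1 + s) := by
  have hns : 0 < n + 1 + s := by linarith
  calc 2 * (n + 1) / n = 2 + 2 / n := by field_simp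
    _ < 2 + 4 / (n + 1 + s) := by
        rw [add_lt_add_iff_left, div_lt_div_iff₀ hn hns]
        linarith

theorem two_add_four_div_lt {n s : ℝ} (hn : 0 < n + 1) (hs : 0 < s) :
    2 + 4 / (n + 1 + s) < 2 * (n + 3) / (n + 1) := by
  calc 2 + 4 / (n + 1 + s) < 2 + 4 / (n + 1) := by
        gcongr 2 + 4 / ?_
        linarith
    _ = 2 * (n + 3) / (n + 1) := by field_simp; ring

theorem stmt13 (n : ℕ) (hn : 3 ≤ n)
    (s pt pn : ℝ)
    (hs : s = ∑ i ∈ Finset.Icc 2 n, (1 : ℝ) / i)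
    (hpt : pt = 2 + 4 / ((n : ℝ) + 1 + s))
    (hpn : pn = 2 * ((n : ℝ) + 1) * (((n : ℝ) + 2) * pt - 2 * ((n : ℝ) + 3)) /
      (((n : ℝ) + 1) * (n : ℝ) * pt - 2 * ((n : ℝ) ^ 2 + 2 * (n : ℝ) - 1))) :
    2 * ((n : ℝ) + 1) / (n : ℝ) < pn ∧ pn < 2 * ((n : ℝ) + 3) / ((n : ℝ) + 1) := by
  have hn0 : (0 : ℝ) < n := by positivity
  have hs_pos : 0 < s := hs ▸ sum_Icc_two_one_div_pos (by omega)
  have hs_lt : s < n - 1 := hs ▸ sum_Icc_two_one_div_lt (by omega)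
  have hlow : 2 * ((n : ℝ) + 1) / n < pt := hpt ▸ two_mul_succ_div_lt_two_add_four_div hn0 hs_pos.le hs_lt
  have hup : pt < 2 * ((n : ℝ) + 3) / (n + 1) := hpt ▸ two_add_four_div_lt (by linarith) hs_pos
  rw [hpn]
  exact ⟨lt_interpolationExponent hn0 hlow, interpolationExponent_lt hn0 hlow hup⟩
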